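/- Let G be a finite nonempty simple graph and t ≥ 1 an integer. Then fdom(G + K_t) = fdom(G) + t, where G + K_t denotes the join of G with the complete graph K_t, i.e. the graph obtained from the disjoint union of G and t new pairwise adjacent vertices by adding all edges between V(G) and the new vertices. -/

import Mathlib

set_option linter.unusedSectionVars false


open Finset
open scoped Classical

/-- `D` is a dominating set of `G`. -/
def IsDominatingSet {V : Type*} (G : SimpleGraph V) (D : Finset V) : Prop :=
  ∀ v : V, ∃ u ∈ D, u = v ∨ G.Adj u v

/-- A finitely supported probability distribution over dominating sets of `G`
under which each vertex has marginal probability at most `p`. -/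
def IsDomDistribution {V : Type*} [Fintype V] [DecidableEq V]
    (G : SimpleGraph V) (w : Finset V → ℝ) (p : ℝ) : Prop :=
  (∀ D, 0 ≤ w D) ∧ (∑ D : Finset V, w D) = 1 ∧
    (∀ D, w D ≠ 0 → IsDominatingSet G D) ∧
    (∀ v : V, ∑ D ∈ Finset.univ.filter (fun D : Finset V => v ∈ D), w D ≤ p)

/-- The fractional domatic number of `G`. -/
noncomputable def fdom {V : Type*} [Fintype V] [DecidableEq V] (G : SimpleGraph V) : ℝ :=
  sSup {x : ℝ | ∃ p : ℝ, 0 < p ∧ p ≤ 1 ∧ x = 1 / p ∧ ∃ w : Finset V → ℝ, IsDomDistribution G w p}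

def fdomSet {V : Type*} [Fintype V] [DecidableEq V] (G : SimpleGraph V) : Set ℝ :=
  {x : ℝ | ∃ p : ℝ, 0 < p ∧ p ≤ 1 ∧ x = 1 / p ∧ ∃ w : Finset V → ℝ, IsDomDistribution G w p}

lemma fdom_eq_sSup {V : Type*} [Fintype V] [DecidableEq V] (G : SimpleGraph V) :
    fdom G = sSup (fdomSet G) := rfl

section general
variable {V : Type*} [Fintype V] [DecidableEq V]

lemma double_sum (w : Finset V → ℝ) :
    ∑ v : V, ∑ D ∈ univ.filter (fun D : Finset V => v ∈ D), w D
      = ∑ D : Finset V, (D.card : ℝ) * w D := by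
  simp only [Finset.sum_filter]
  rw [Finset.sum_comm]
  refine Finset.sum_congr rfl fun D _ => ?_
  rw [Finset.sum_ite_mem, Finset.univ_inter, Finset.sum_const, nsmul_eq_mul]

lemma dom_nonempty [Nonempty V] {G : SimpleGraph V} {D : Finset V}
    (h : IsDominatingSet G D) : D.Nonempty := by
  obtain ⟨v⟩ := ‹Nonempty V›
  obtain ⟨u, hu, -⟩ := h v
  exact ⟨u, hu⟩

lemma univ_dominating (G : SimpleGraph V) : IsDominatingSet G univ :=
  fun v => ⟨v, mem_univ v, Or.inl rfl⟩

lemma one_mem_fdomSet [Nonempty V] (G : SimpleGraph V) : (1 : ℝ) ∈ fdomSet G := by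
  refine ⟨1, one_pos, le_refl 1, by norm_num, fun D => if D = univ then 1 else 0, ?_, ?_, ?_, ?_⟩
  · intro D; dsimp only; split <;> norm_num
  · simp
  · intro D hD
    have : D = univ := by by_contra h; simp [h] at hD
    rw [this]; exact univ_dominating G
  · intro v
    dsimp only
    rw [Finset.sum_ite_eq' (filter (fun D : Finset V => v ∈ D) univ) univ (fun _ => (1:ℝ))]
    simp

lemma fdomSet_bddAbove [Nonempty V] (G : SimpleGraph V) :
    BddAbove (fdomSet G) := by
  refine ⟨(Fintype.card V : ℝ), fun x hx => ?_⟩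
  obtain ⟨p, hp0, hp1, rfl, w, hw0, hw1, hwdom, hwmarg⟩ := hx
  have h1 : (1 : ℝ) ≤ ∑ D : Finset V, (D.card : ℝ) * w D := by
    calc (1:ℝ) = ∑ D : Finset V, w D := hw1.symm
    _ ≤ ∑ D : Finset V, (D.card : ℝ) * w D := by
        refine Finset.sum_le_sum fun D _ => ?_
        by_cases h : w D = 0
        · simp [h]
        · have hne := dom_nonempty (hwdom D h)
          have : (1:ℝ) ≤ D.card := by exact_mod_cast Finset.card_pos.mpr hne
          nlinarith [hw0 D]
  have h2 : ∑ D : Finset V, (D.card : ℝ) * w D ≤ (Fintype.card V : ℝ) * p := by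
    rw [← double_sum]
    calc ∑ v : V, ∑ D ∈ univ.filter (fun D : Finset V => v ∈ D), w D
        ≤ ∑ _v : V, p := Finset.sum_le_sum fun v _ => hwmarg v
      _ = (Fintype.card V : ℝ) * p := by simp [mul_comm]
  rw [div_le_iff₀ hp0]
  linarith

lemma one_le_fdom [Nonempty V] (G : SimpleGraph V) : 1 ≤ fdom G :=
  le_csSup (fdomSet_bddAbove G) (one_mem_fdomSet G)

end general


/-- The join `G + K_t` of `G` with a complete graph on `t` new vertices: the new vertices are
pairwise adjacent and adjacent to every vertex of `G`. -/
def joinKt {V : Type*} (G : SimpleGraph V) (t : ℕ) : SimpleGraph (V ⊕ Fin t) :=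
  SimpleGraph.fromRel (fun x y =>
    match x, y with
    | .inl a, .inl b => G.Adj a b
    | _, _ => True)

section join
variable {V : Type*} {t : ℕ}

def IsPure (E : Finset (V ⊕ Fin t)) : Prop := ∀ x ∈ E, ∃ v, x = Sum.inl v

noncomputable def fwd [DecidableEq V] (D : Finset V) : Finset (V ⊕ Fin t) :=
  D.map ⟨Sum.inl, Sum.inl_injective⟩

noncomputable def bck [DecidableEq V] (E : Finset (V ⊕ Fin t)) : Finset V :=
  E.preimage Sum.inl (Sum.inl_injective.injOn)

variable [DecidableEq V]

lemma mem_fwd {D : Finset V} {v : V} : (Sum.inl v : V ⊕ Fin t) ∈ fwd D ↔ v ∈ D := by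
  simp [fwd]

lemma inr_not_mem_fwd {D : Finset V} {i : Fin t} : (Sum.inr i : V ⊕ Fin t) ∉ fwd D := by
  simp [fwd]

lemma isPure_fwd (D : Finset V) : IsPure (fwd (t := t) D) := by
  intro x hx
  simp only [fwd, Finset.mem_map, Function.Embedding.coeFn_mk] at hx
  obtain ⟨v, -, rfl⟩ := hx
  exact ⟨v, rfl⟩

lemma bck_fwd (D : Finset V) : bck (fwd (t := t) D) = D := by
  ext v; simp [bck, Finset.mem_preimage, mem_fwd]

lemma fwd_bck {E : Finset (V ⊕ Fin t)} (h : IsPure E) : fwd (bck E) = E := by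
  ext x
  cases x with
  | inl v => simp [mem_fwd, bck, Finset.mem_preimage]
  | inr i =>
    simp only [inr_not_mem_fwd, false_iff]
    intro hx
    obtain ⟨v, hv⟩ := h _ hx
    exact nomatch hv

lemma fwd_injective : Function.Injective (fwd (V := V) (t := t)) :=
  Finset.map_injective _

lemma sum_pure [Fintype V] (g : Finset (V ⊕ Fin t) → ℝ)
    (hg : ∀ E, ¬ IsPure E → g E = 0) :
    ∑ E : Finset (V ⊕ Fin t), g E = ∑ D : Finset V, g (fwd D) := by
  rw [← Finset.sum_image (f := g) (g := fwd) (fun x _ y _ h => fwd_injective h)]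
  symm
  apply Finset.sum_subset (Finset.subset_univ _)
  intro E _ hE
  apply hg
  intro hpure
  exact hE (Finset.mem_image.mpr ⟨bck E, Finset.mem_univ _, fwd_bck hpure⟩)

lemma joinKt_adj_inl_inl {G : SimpleGraph V} {a b : V} :
    (joinKt G t).Adj (Sum.inl a) (Sum.inl b) ↔ G.Adj a b := by
  simp only [joinKt, SimpleGraph.fromRel_adj]
  constructor
  · rintro ⟨-, h | h⟩
    · exact h
    · exact h.symm
  · intro h
    exact ⟨by simp [G.ne_of_adj h], Or.inl h⟩

lemma joinKt_adj_inl_inr {G : SimpleGraph V} {a : V} {i : Fin t} :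
    (joinKt G t).Adj (Sum.inl a) (Sum.inr i) := by
  simp only [joinKt, SimpleGraph.fromRel_adj]
  exact ⟨by simp, Or.inl trivial⟩

lemma joinKt_adj_inr {G : SimpleGraph V} {i : Fin t} {y : V ⊕ Fin t}
    (h : (Sum.inr i : V ⊕ Fin t) ≠ y) : (joinKt G t).Adj (Sum.inr i) y := by
  simp only [joinKt, SimpleGraph.fromRel_adj]
  exact ⟨h, Or.inl trivial⟩

end join

section main
variable {V : Type*} [Fintype V] [DecidableEq V] [Nonempty V]

lemma plus_t_mem (G : SimpleGraph V) (t : ℕ) {x : ℝ}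
    (hx : x ∈ fdomSet G) : x + t ∈ fdomSet (joinKt G t) := by
  obtain ⟨p, hp0, hp1, rfl, w, hw0, hw1, hwdom, hwmarg⟩ := hx
  set c : ℝ := 1 + t * p with hc
  have hc1 : (1:ℝ) ≤ c := by
    have : (0:ℝ) ≤ t * p := by positivity
    linarith
  have hc0 : (0:ℝ) < c := by linarith
  set q : ℝ := p / c with hq
  have hq0 : 0 < q := by positivity
  have hq1 : q ≤ 1 := by
    rw [hq, div_le_one hc0]; linarith
  refine ⟨q, hq0, hq1, ?_, ?_⟩
  · rw [hq]
    rw [hc]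
    field_simp
  · refine ⟨fun E => (∑ i : Fin t, if E = {Sum.inr i} then q else 0)
      + (if IsPure E then w (bck E) / c else 0), ?_, ?_, ?_, ?_⟩
    · intro E
      have h1 : (0:ℝ) ≤ ∑ i : Fin t, if E = {Sum.inr i} then q else 0 := by
        apply Finset.sum_nonneg; intro i _; split <;> [linarith; rfl]
      have h2 : (0:ℝ) ≤ if IsPure E then w (bck E) / c else 0 := by
        split; · exact div_nonneg (hw0 _) hc0.le
        · rfl
      linarith
    · rw [Finset.sum_add_distrib]
      have e1 : ∑ E : Finset (V ⊕ Fin t), ∑ i : Fin t, (if E = {Sum.inr i} then q else 0)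
          = t * q := by
        rw [Finset.sum_comm]
        have : ∀ i : Fin t, ∑ E : Finset (V ⊕ Fin t), (if E = {Sum.inr i} then q else 0) = q := by
          intro i
          rw [Finset.sum_ite_eq' Finset.univ ({Sum.inr i} : Finset (V ⊕ Fin t)) (fun _ => q)]
          simp
        simp [this]
      have e2 : ∑ E : Finset (V ⊕ Fin t), (if IsPure E then w (bck E) / c else 0)
          = 1 / c := by
        rw [sum_pure _ (fun E hE => by simp [hE])]
        have : ∀ D : Finset V, (if IsPure (fwd (t := t) D) then w (bck (fwd (t := t) D)) / c else 0)
            = w D / c := by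
          intro D; rw [if_pos (isPure_fwd D), bck_fwd]
        rw [Finset.sum_congr rfl (fun D _ => this D), ← Finset.sum_div, hw1]
      rw [e1, e2, hq, hc]
      field_simp
      ring
    · intro E hE
      by_cases hpure : IsPure E
      · have hw' : w (bck E) ≠ 0 := by
          intro h0
          apply hE
          have : ∑ i : Fin t, (if E = {Sum.inr i} then q else 0) = 0 := by
            apply Finset.sum_eq_zero; intro i _
            rw [if_neg]
            intro h
            obtain ⟨v, hv⟩ := hpure (Sum.inr i) (h ▸ Finset.mem_singleton_self _)
            exact nomatch hv
          simp [this, hpure, h0]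
        have hdom := hwdom _ hw'
        intro y
        cases y with
        | inl v =>
          obtain ⟨u, hu, huv⟩ := hdom v
          refine ⟨Sum.inl u, ?_, ?_⟩
          · rw [← fwd_bck hpure]; exact mem_fwd.mpr hu
          · rcases huv with rfl | hadj
            · exact Or.inl rfl
            · exact Or.inr (joinKt_adj_inl_inl.mpr hadj)
        | inr i =>
          obtain ⟨u, hu⟩ := dom_nonempty hdom
          refine ⟨Sum.inl u, ?_, Or.inr joinKt_adj_inl_inr⟩
          rw [← fwd_bck hpure]; exact mem_fwd.mpr hu
      · have : ∃ i : Fin t, E = {Sum.inr i} := by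
          by_contra h
          push_neg at h
          apply hE
          simp only [if_neg hpure, add_zero]
          exact Finset.sum_eq_zero fun i _ => if_neg (h i)
        obtain ⟨i, rfl⟩ := this
        intro y
        refine ⟨Sum.inr i, Finset.mem_singleton_self _, ?_⟩
        by_cases hy : (Sum.inr i : V ⊕ Fin t) = y
        · exact Or.inl hy
        · exact Or.inr (joinKt_adj_inr hy)
    · intro y
      rw [Finset.sum_filter]
      have split_ite : ∀ E : Finset (V ⊕ Fin t),
          (if y ∈ E then (∑ i : Fin t, if E = {Sum.inr i} then q else 0)
            + (if IsPure E then w (bck E) / c else 0) else 0)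
          = (if y ∈ E then (∑ i : Fin t, if E = {Sum.inr i} then q else 0) else 0)
            + (if y ∈ E then (if IsPure E then w (bck E) / c else 0) else 0) := by
        intro E; split <;> simp
      rw [Finset.sum_congr rfl (fun E _ => split_ite E), Finset.sum_add_distrib]
      cases y with
      | inl v =>
        have e1 : ∑ E : Finset (V ⊕ Fin t),
            (if Sum.inl v ∈ E then ∑ i : Fin t, (if E = {Sum.inr i} then q else 0) else 0) = 0 := by
          apply Finset.sum_eq_zero; intro E _
          split
          · apply Finset.sum_eq_zero; intro i _
            rw [if_neg]
            rintro rfl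
            simp_all
          · rfl
        have e2 : ∑ E : Finset (V ⊕ Fin t),
            (if Sum.inl v ∈ E then (if IsPure E then w (bck E) / c else 0) else 0)
            ≤ p / c := by
          rw [sum_pure _ (fun E hE => by simp [hE])]
          have he : ∀ D : Finset V, (if Sum.inl v ∈ fwd (t := t) D
              then (if IsPure (fwd (t := t) D) then w (bck (fwd (t := t) D)) / c else 0) else 0)
              = if v ∈ D then w D / c else 0 := by
            intro D
            rw [if_pos (isPure_fwd D), bck_fwd]
            by_cases h : v ∈ D
            · rw [if_pos (mem_fwd.mpr h), if_pos h]
            · rw [if_neg (fun hh => h (mem_fwd.mp hh)), if_neg h]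
          rw [Finset.sum_congr rfl (fun D _ => he D)]
          have hm := hwmarg v
          rw [Finset.sum_filter] at hm
          calc ∑ D : Finset V, (if v ∈ D then w D / c else 0)
              = (∑ D : Finset V, (if v ∈ D then w D else 0)) / c := by
                rw [Finset.sum_div]
                exact Finset.sum_congr rfl fun D _ => by split <;> simp
            _ ≤ p / c := by gcongr
        rw [hq]
        linarith
      | inr i =>
        have e2 : ∑ E : Finset (V ⊕ Fin t),
            (if Sum.inr i ∈ E then (if IsPure E then w (bck E) / c else 0) else 0) = 0 := by
          apply Finset.sum_eq_zero; intro E _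
          by_cases h : Sum.inr i ∈ E
          · rw [if_pos h, if_neg]
            intro hpure
            obtain ⟨v, hv⟩ := hpure _ h
            exact nomatch hv
          · rw [if_neg h]
        have e1 : ∑ E : Finset (V ⊕ Fin t),
            (if Sum.inr i ∈ E then ∑ j : Fin t, (if E = {Sum.inr j} then q else 0) else 0)
            = q := by
          have he : ∀ E : Finset (V ⊕ Fin t),
              (if Sum.inr i ∈ E then ∑ j : Fin t, (if E = {Sum.inr j} then q else 0) else 0)
              = if E = {Sum.inr i} then q else 0 := by
            intro E
            by_cases h : Sum.inr i ∈ E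
            · rw [if_pos h]
              rw [Finset.sum_eq_single i]
              · intro j _ hj
                rw [if_neg]
                rintro rfl
                rw [Finset.mem_singleton] at h
                exact hj (Sum.inr_injective h).symm
              · intro hi; exact absurd (Finset.mem_univ i) hi
            · rw [if_neg h, if_neg]
              rintro rfl
              exact h (Finset.mem_singleton_self _)
          rw [Finset.sum_congr rfl (fun E _ => he E)]
          rw [Finset.sum_ite_eq' Finset.univ ({Sum.inr i} : Finset (V ⊕ Fin t)) (fun _ => q)]
          simp
        rw [e1, e2]
        linarith

lemma mem_fdomSet_join_le (G : SimpleGraph V) (t : ℕ) {x : ℝ}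
    (hx : x ∈ fdomSet (joinKt G t)) : x ≤ fdom G + t := by
  obtain ⟨p', hp0, hp1, rfl, w', hw0, hw1, hwdom, hwmarg⟩ := hx
  have hfd1 : (1:ℝ) ≤ fdom G := one_le_fdom G
  by_cases hcase : 1 ≤ (t + 1 : ℝ) * p'
  · have : 1 / p' ≤ (t : ℝ) + 1 := by
      rw [div_le_iff₀ hp0]; linarith
    linarith
  push_neg at hcase
  -- A = weight of pure sets
  set A : ℝ := ∑ D : Finset V, w' (fwd D) with hA
  have hApure : A = ∑ E : Finset (V ⊕ Fin t), (if IsPure E then w' E else 0) := by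
    rw [sum_pure _ (fun E hE => by simp [hE])]
    exact Finset.sum_congr rfl fun D _ => (if_pos (isPure_fwd D)).symm
  -- 1 - A ≤ t * p'
  have hkey : 1 - A ≤ (t : ℝ) * p' := by
    have h1 : 1 - A = ∑ E : Finset (V ⊕ Fin t), (if IsPure E then 0 else w' E) := by
      rw [hApure, ← hw1, ← Finset.sum_sub_distrib]
      exact Finset.sum_congr rfl fun E _ => by split <;> ring
    have h2 : ∀ E : Finset (V ⊕ Fin t), (if IsPure E then 0 else w' E)
        ≤ ∑ i : Fin t, (if Sum.inr i ∈ E then w' E else 0) := by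
      intro E
      split
      · apply Finset.sum_nonneg
        intro i _; split; exacts [hw0 E, le_refl _]
      · next h =>
        have : ∃ i : Fin t, Sum.inr i ∈ E := by
          simp only [IsPure, not_forall] at h
          obtain ⟨x, hx, hx2⟩ := h
          cases x with
          | inl v => exact absurd ⟨v, rfl⟩ hx2
          | inr i => exact ⟨i, hx⟩
        obtain ⟨i, hi⟩ := this
        calc w' E = if Sum.inr i ∈ E then w' E else 0 := (if_pos hi).symm
          _ ≤ ∑ j : Fin t, (if Sum.inr j ∈ E then w' E else 0) := by
              apply Finset.single_le_sum (f := fun j : Fin t => if Sum.inr j ∈ E then w' E else 0)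
                (fun j _ => by split; exacts [hw0 E, le_refl _]) (Finset.mem_univ i)
    have h3 : ∑ E : Finset (V ⊕ Fin t), ∑ i : Fin t, (if Sum.inr i ∈ E then w' E else 0)
        ≤ (t : ℝ) * p' := by
      rw [Finset.sum_comm]
      calc ∑ i : Fin t, ∑ E : Finset (V ⊕ Fin t), (if Sum.inr i ∈ E then w' E else 0)
          ≤ ∑ _i : Fin t, p' := by
            apply Finset.sum_le_sum
            intro i _
            have := hwmarg (Sum.inr i)
            rwa [Finset.sum_filter] at this
        _ = (t : ℝ) * p' := by simp [mul_comm]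
    calc 1 - A = ∑ E : Finset (V ⊕ Fin t), (if IsPure E then 0 else w' E) := h1
      _ ≤ ∑ E : Finset (V ⊕ Fin t), ∑ i : Fin t, (if Sum.inr i ∈ E then w' E else 0) :=
          Finset.sum_le_sum fun E _ => h2 E
      _ ≤ (t : ℝ) * p' := h3
  have htp : (0:ℝ) ≤ (t:ℝ) * p' := by positivity
  have hAp : p' < A := by nlinarith
  have hA0 : (0:ℝ) < A := lt_trans hp0 hAp
  -- the induced distribution on G
  set p : ℝ := p' / A with hp
  have hpp0 : 0 < p := by positivity
  have hpp1 : p ≤ 1 := by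
    rw [hp, div_le_one hA0]; linarith
  have hmem : 1 / p ∈ fdomSet G := by
    refine ⟨p, hpp0, hpp1, rfl, fun D => w' (fwd D) / A, ?_, ?_, ?_, ?_⟩
    · intro D; exact div_nonneg (hw0 _) hA0.le
    · rw [← Finset.sum_div, ← hA, div_self hA0.ne']
    · intro D hD
      have hne : w' (fwd D) ≠ 0 := fun h => hD (by simp [h])
      have hdom := hwdom _ hne
      intro v
      obtain ⟨u, hu, huv⟩ := hdom (Sum.inl v)
      obtain ⟨u', rfl⟩ := isPure_fwd D u hu
      refine ⟨u', mem_fwd.mp hu, ?_⟩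
      rcases huv with h | h
      · exact Or.inl (Sum.inl_injective h)
      · exact Or.inr (joinKt_adj_inl_inl.mp h)
    · intro v
      rw [Finset.sum_filter]
      have step : ∑ D : Finset V, (if v ∈ D then w' (fwd D) / A else 0)
          = (∑ D : Finset V, (if v ∈ D then w' (fwd D) else 0)) / A := by
        rw [Finset.sum_div]
        exact Finset.sum_congr rfl fun D _ => by split <;> simp
      rw [step, hp]
      have hsum : ∑ D : Finset V, (if v ∈ D then w' (fwd D) else 0)
          = ∑ E : Finset (V ⊕ Fin t),
              (if Sum.inl v ∈ E then (if IsPure E then w' E else 0) else 0) := by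
        rw [sum_pure _ (fun E hE => by simp [hE])]
        refine Finset.sum_congr rfl fun D _ => ?_
        by_cases h : v ∈ D
        · rw [if_pos h, if_pos (mem_fwd.mpr h), if_pos (isPure_fwd D)]
        · rw [if_neg h, if_neg (fun hh => h (mem_fwd.mp hh))]
      have hbound : ∑ D : Finset V, (if v ∈ D then w' (fwd D) else 0) ≤ p' := by
        rw [hsum]
        calc ∑ E : Finset (V ⊕ Fin t),
              (if Sum.inl v ∈ E then (if IsPure E then w' E else 0) else 0)
            ≤ ∑ E : Finset (V ⊕ Fin t), (if Sum.inl v ∈ E then w' E else 0) := by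
              apply Finset.sum_le_sum
              intro E _
              by_cases h : Sum.inl v ∈ E
              · rw [if_pos h, if_pos h]; split; exacts [le_refl _, hw0 E]
              · rw [if_neg h, if_neg h]
          _ ≤ p' := by have := hwmarg (Sum.inl v); rwa [Finset.sum_filter] at this
      gcongr
  have hle : 1 / p ≤ fdom G := le_csSup (fdomSet_bddAbove G) hmem
  have h1p : 1 / p = A / p' := by rw [hp, one_div_div]
  rw [h1p] at hle
  have hfin : (1:ℝ)/p' ≤ A/p' + t := by
    have h2 : (1:ℝ) ≤ A + t * p' := by linarith
    calc (1:ℝ)/p' ≤ (A + t*p')/p' := by gcongr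
      _ = A/p' + t := by field_simp
  linarith
end main

/-- For every nonempty graph `G` and integer `t ≥ 1`, `fdom (G + K_t) = fdom G + t`. -/
theorem fdom_joinKt {V : Type*} [Fintype V] [DecidableEq V] [Nonempty V]
    (G : SimpleGraph V) (t : ℕ) (ht : 1 ≤ t) :
    fdom (joinKt G t) = fdom G + t := by
  have hS' : (fdomSet (joinKt G t)).Nonempty := ⟨1, one_mem_fdomSet _⟩
  have hS : (fdomSet G).Nonempty := ⟨1, one_mem_fdomSet _⟩
  have hbdd' := fdomSet_bddAbove (joinKt G t)
  apply le_antisymm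
  · rw [fdom_eq_sSup]
    exact csSup_le hS' (fun x hx => mem_fdomSet_join_le G t hx)
  · rw [fdom_eq_sSup (joinKt G t)]
    have hstep : sSup (fdomSet G) ≤ sSup (fdomSet (joinKt G t)) - t := by
      apply csSup_le hS
      intro x hx
      have := le_csSup hbdd' (plus_t_mem G t hx)
      linarith
    rw [fdom_eq_sSup G] at *
    linarith
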